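/- arXiv:1802.08756 — 2 statements merged into one kernel-verified Lean document; each statement's English description precedes it below -/
import Mathlib

section
/- In any guarded category, the family Hom^gd of guarded morphisms is a guarded ideal: Hom^gd(I,I) = Hom(I,I), Hom^gd is closed under ⊗, and Hom^gd is closed under composition with arbitrary morphisms on both sides. -/
/-! Statement 5: the guarded morphisms of a guarded category form a guarded ideal. -/

open CategoryTheory MonoidalCategory

universe v u

/-- An (abstractly) guarded category structure on a symmetric monoidal category `C`:
distinguished subsets `Hom•(A⊗B, C⊗D) ⊆ Hom(A⊗B, C⊗D)` of partially guarded morphisms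
(`A`: unguarded inputs, `B`: guarded inputs, `C`: unguarded outputs, `D`: guarded outputs),
closed under the rules (uni), (vac), (cmp), (par). -/
structure GuardedStructure (C : Type u) [Category.{v} C] [MonoidalCategory C]
    [SymmetricCategory C] where
  /-- the family of sets of partially guarded morphisms -/
  P : ∀ A B X D : C, Set ((A ⊗ B) ⟶ X ⊗ D)
  /-- rule (uni⊗) -/
  uni : ∀ A : C, (β_ (𝟙_ C) A).hom ∈ P (𝟙_ C) A A (𝟙_ C)
  /-- rule (vac⊗) -/
  vac : ∀ {A B X D : C} (f : A ⟶ X) (g : B ⟶ D), (f ⊗ₘ g) ∈ P A B X D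
  /-- rule (cmp⊗) -/
  cmp : ∀ {A B E F X D : C} {g : (A ⊗ B) ⟶ E ⊗ F} {f : (E ⊗ F) ⟶ X ⊗ D},
    g ∈ P A B E F → f ∈ P E F X D → g ≫ f ∈ P A B X D
  /-- rule (par⊗): the evident transpose of `f ⊗ g` (conjugation by the middle-four
  interchange coherence isomorphism) is partially guarded. -/
  par : ∀ {A B X D A' B' X' D' : C}
    {f : (A ⊗ B) ⟶ X ⊗ D} {g : (A' ⊗ B') ⟶ X' ⊗ D'},
    f ∈ P A B X D → g ∈ P A' B' X' D' →
      tensorμ A A' B B' ≫ (f ⊗ₘ g) ≫ tensorμ X D X' D' ∈ P (A ⊗ A') (B ⊗ B') (X ⊗ X') (D ⊗ D')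

variable {C : Type u} [Category.{v} C] [MonoidalCategory C] [SymmetricCategory C]

/-- A morphism `f : X ⟶ Y` of a guarded category is *guarded* if
`υ_Y⁻¹ ∘ f ∘ υ̂_X ∈ Hom•(X ⊗ I, I ⊗ Y)` (all inputs unguarded, all outputs guarded). -/
def GuardedMor (G : GuardedStructure C) (X Y : C) : Set (X ⟶ Y) :=
  {f | (ρ_ X).hom ≫ f ≫ (λ_ Y).inv ∈ G.P X (𝟙_ C) (𝟙_ C) Y}

/-- A *guarded ideal* in a symmetric monoidal category: a family of subsets
`G(X,Y) ⊆ Hom(X,Y)` closed under `⊗` and under composition with arbitrary morphisms on both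
sides, with `G(I,I) = Hom(I,I)`. -/
def IsGuardedIdeal (Gd : ∀ X Y : C, Set (X ⟶ Y)) : Prop :=
  (∀ f : 𝟙_ C ⟶ 𝟙_ C, f ∈ Gd (𝟙_ C) (𝟙_ C)) ∧
  (∀ {X Y X' Y' : C} (f : X ⟶ Y) (g : X' ⟶ Y'),
     f ∈ Gd X Y → g ∈ Gd X' Y' → (f ⊗ₘ g) ∈ Gd (X ⊗ X') (Y ⊗ Y')) ∧
  (∀ {W X Y Z : C} (u : W ⟶ X) (f : X ⟶ Y) (v : Y ⟶ Z),
     f ∈ Gd X Y → u ≫ f ≫ v ∈ Gd W Z)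

namespace GuardedStructure

variable (G : GuardedStructure C)

theorem tensorHom_comp_comp_tensorHom_mem {A B E F E' F' X D : C} (a : A ⟶ E) (b : B ⟶ F)
    {g : (E ⊗ F) ⟶ E' ⊗ F'} (hg : g ∈ G.P E F E' F') (x : E' ⟶ X) (d : F' ⟶ D) :
    (a ⊗ₘ b) ≫ g ≫ (x ⊗ₘ d) ∈ G.P A B X D :=
  G.cmp (G.vac a b) (G.cmp hg (G.vac x d))

theorem mem_guardedMor_unit (f : 𝟙_ C ⟶ 𝟙_ C) : f ∈ GuardedMor G (𝟙_ C) (𝟙_ C) := by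
  have h : (ρ_ (𝟙_ C)).hom ≫ f ≫ (λ_ (𝟙_ C)).inv = f ⊗ₘ 𝟙 (𝟙_ C) := by monoidal
  show _ ∈ G.P _ _ _ _
  rw [h]
  exact G.vac f (𝟙 (𝟙_ C))

theorem comp_comp_mem_guardedMor {W X Y Z : C} (u : W ⟶ X) {f : X ⟶ Y}
    (hf : f ∈ GuardedMor G X Y) (v : Y ⟶ Z) : u ≫ f ≫ v ∈ GuardedMor G W Z := by
  have heq : (u ⊗ₘ 𝟙 (𝟙_ C)) ≫ ((ρ_ X).hom ≫ f ≫ (λ_ Y).inv) ≫ (𝟙 (𝟙_ C) ⊗ₘ v) =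
      (ρ_ W).hom ≫ (u ≫ f ≫ v) ≫ (λ_ Z).inv := by simp
  show _ ∈ G.P _ _ _ _
  rw [← heq]
  exact G.tensorHom_comp_comp_tensorHom_mem u _ hf _ v

/-- (par) yields a morphism `(X ⊗ X') ⊗ (I ⊗ I) ⟶ (I ⊗ I) ⊗ (Y ⊗ Y')`; the vacuous morphisms
`𝟙 ⊗ λ_I⁻¹` and `λ_I ⊗ 𝟙` remove the doubled unit, and the braidings inside `tensorμ` are
braidings with `I`, hence unitors. -/
theorem tensorHom_mem_guardedMor {X Y X' Y' : C} {f : X ⟶ Y} {g : X' ⟶ Y'}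
    (hf : f ∈ GuardedMor G X Y) (hg : g ∈ GuardedMor G X' Y') :
    (f ⊗ₘ g) ∈ GuardedMor G (X ⊗ X') (Y ⊗ Y') := by
  have heq : (𝟙 (X ⊗ X') ⊗ₘ (λ_ (𝟙_ C)).inv) ≫
      (tensorμ X X' (𝟙_ C) (𝟙_ C) ≫
        (((ρ_ X).hom ≫ f ≫ (λ_ Y).inv) ⊗ₘ ((ρ_ X').hom ≫ g ≫ (λ_ Y').inv)) ≫
        tensorμ (𝟙_ C) Y (𝟙_ C) Y') ≫ ((λ_ (𝟙_ C)).hom ⊗ₘ 𝟙 (Y ⊗ Y')) =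
      (ρ_ (X ⊗ X')).hom ≫ (f ⊗ₘ g) ≫ (λ_ (Y ⊗ Y')).inv := by
    simp only [tensorμ, braiding_tensorUnit_right]
    monoidal
  show _ ∈ G.P _ _ _ _
  rw [← heq]
  exact G.tensorHom_comp_comp_tensorHom_mem _ _ (G.par hf hg) _ _

end GuardedStructure

/-- In any guarded category, the family `Hom^gd` of guarded morphisms is a
guarded ideal: `Hom^gd(I,I) = Hom(I,I)`, it is closed under `⊗`, and it is closed under
composition with arbitrary morphisms on both sides. -/
theorem guardedMor_isGuardedIdeal (G : GuardedStructure C) :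
    IsGuardedIdeal (GuardedMor G) :=
  ⟨G.mem_guardedMor_unit, fun _ _ => G.tensorHom_mem_guardedMor,
    fun u _ v hf => G.comp_comp_mem_guardedMor u hf v⟩
end

section
/- Let G be a guarded ideal on a Cartesian closed category C. Define a candidate Cartesian guardedness family by: f ∈ Hom^{pr₁}(X×Y, Z) iff curry(f) ∈ G(X, Z^Y). This family describes the guarded structure generated by G if and only if G is exponential, i.e. f ∈ G(X,Y) implies f^V ∈ G(X^V, Y^V) for every object V. -/
/-! In a Cartesian closed category the candidate family is the guarded structure in which
`f : A × B → X × Y` is partially guarded iff its transpose `c_f := curry (pr₂ ∘ f)` lies in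
`Gd A (Y^B)`. For any guarded ideal this family satisfies (uni), (vac) and (par). For (cmp), the
guarded output of `f ∘ g` is `(a, b) ↦ c_f (g₁ (a, b)) (c_g a b)`, whose transpose factors
through `⟨c_f^B ∘ curry g₁, c_g⟩`, and `c_f^B ∈ Gd` is exactly exponentiality. So if `Gd` is
exponential, minimality of the generated structure puts it inside the curry structure, while
guardedness of `curry f` in the generated structure makes `⟨!, ev ∘ (curry f × 1)⟩` partially
guarded. Conversely, if the description holds, then for `f ∈ Gd` the morphism `⟨!, f ∘ ev⟩` is
partially guarded, so its transpose `f^V` lies in `Gd`. -/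

open CategoryTheory MonoidalCategory

universe v u

variable {C : Type u} [Category.{v} C] [MonoidalCategory C] [SymmetricCategory C]

/-- `G` is the guarded structure *generated* by the family `Gd`: it is the least guarded
structure in which every member of every `Gd X Y` is a guarded morphism.  A guarded category
is *ideally guarded over `Gd`* if its guarded structure is generated by `Gd`. -/
def Generates (Gd : ∀ X Y : C, Set (X ⟶ Y)) (G : GuardedStructure C) : Prop :=
  (∀ (X Y : C) (f : X ⟶ Y), f ∈ Gd X Y → f ∈ GuardedMor G X Y) ∧
  (∀ G' : GuardedStructure C,
    (∀ (X Y : C) (f : X ⟶ Y), f ∈ Gd X Y → f ∈ GuardedMor G' X Y) →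
    ∀ (A B X D : C) (f : (A ⊗ B) ⟶ X ⊗ D), f ∈ G.P A B X D → f ∈ G'.P A B X D)

open CategoryTheory.CartesianMonoidalCategory CategoryTheory.CartesianClosed CategoryTheory.MonoidalClosed

section CCC

variable {D : Type u} [Category.{v} D] [CartesianMonoidalCategory D] [MonoidalClosed D]

attribute [local instance] BraidedCategory.ofCartesianMonoidalCategory

namespace GuardedStructure

variable (G : GuardedStructure C)

lemma tensorHom_comp_comp_tensorHom_mem_s10 {A B X Y A' B' X' Y' : C} {f : A ⊗ B ⟶ X ⊗ Y}
    (hf : f ∈ G.P A B X Y) (u : A' ⟶ A) (u' : B' ⟶ B) (v : X ⟶ X') (w : Y ⟶ Y') :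
    (u ⊗ₘ u') ≫ f ≫ (v ⊗ₘ w) ∈ G.P A' B' X' Y' :=
  G.cmp (G.vac u u') (G.cmp hf (G.vac v w))

end GuardedStructure

namespace IsGuardedIdeal

variable {M : Type*} [Category M] [MonoidalCategory M] {Gd : ∀ X Y : M, Set (X ⟶ Y)}
  (hGd : IsGuardedIdeal Gd)
include hGd

lemma tensorHom_mem {X Y X' Y' : M} {f : X ⟶ Y} {g : X' ⟶ Y'} (hf : f ∈ Gd X Y)
    (hg : g ∈ Gd X' Y') : f ⊗ₘ g ∈ Gd (X ⊗ X') (Y ⊗ Y') :=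
  hGd.2.1 f g hf hg

lemma comp_mem_left {W X Y : M} (u : W ⟶ X) {f : X ⟶ Y} (hf : f ∈ Gd X Y) : u ≫ f ∈ Gd W Y := by
  simpa using hGd.2.2 u f (𝟙 Y) hf

lemma comp_mem_right {X Y Z : M} {f : X ⟶ Y} (hf : f ∈ Gd X Y) (v : Y ⟶ Z) : f ≫ v ∈ Gd X Z := by
  simpa using hGd.2.2 (𝟙 X) f v hf

lemma comp_mem_of_unit {W Z : M} (u : W ⟶ 𝟙_ M) (v : 𝟙_ M ⟶ Z) : u ≫ v ∈ Gd W Z := by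
  simpa using hGd.2.2 u (𝟙 _) v (hGd.1 _)

end IsGuardedIdeal

section Cartesian

variable {E : Type*} [Category E] [CartesianMonoidalCategory E]

lemma IsGuardedIdeal.lift_mem {Gd : ∀ X Y : E, Set (X ⟶ Y)} (hGd : IsGuardedIdeal Gd)
    {W X Y : E} {f : W ⟶ X} {g : W ⟶ Y} (hf : f ∈ Gd W X) (hg : g ∈ Gd W Y) :
    lift f g ∈ Gd W (X ⊗ Y) := by
  simpa using hGd.comp_mem_left (lift (𝟙 W) (𝟙 W)) (hGd.tensorHom_mem hf hg)

namespace GuardedStructure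

variable (G : GuardedStructure E)

lemma lift_toUnit_mem {A B X : E} (h : A ⊗ B ⟶ X) : lift h (toUnit _) ∈ G.P A B X (𝟙_ E) := by
  have hid : 𝟙 (A ⊗ 𝟙_ E) ∈ G.P A (𝟙_ E) A (𝟙_ E) := by simpa using G.vac (𝟙 A) (𝟙 (𝟙_ E))
  convert G.tensorHom_comp_comp_tensorHom_mem_s10 (G.par hid (G.uni B)) (ρ_ A).inv (λ_ B).inv h
    (toUnit _) using 1
  ext
  simp only [Category.assoc, lift_fst, tensorHom_fst, tensorμ_fst_assoc,
    tensorHom_comp_tensorHom_assoc, Category.id_comp, braiding_hom_fst]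
  conv_lhs => rw [← Category.id_comp h]
  simp only [← Category.assoc]
  congr 1
  ext <;> simp

lemma lift_toUnit_comp_mem {A B X Y : E} {f : X ⟶ Y} (hf : f ∈ GuardedMor G X Y)
    (h : A ⊗ B ⟶ X) : lift (toUnit _) (h ≫ f) ∈ G.P A B (𝟙_ E) Y := by
  convert G.cmp (G.lift_toUnit_mem h) hf using 1
  ext
  simp [rightUnitor_hom]

lemma lift_toUnit_whiskerRight_comp_mem {X Y W Z : E} {c : X ⟶ W} (hc : c ∈ GuardedMor G X W)
    (e : W ⊗ Y ⟶ Z) : lift (toUnit (X ⊗ Y)) (c ▷ Y ≫ e) ∈ G.P X Y (𝟙_ E) Z := by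
  have hid : 𝟙 (𝟙_ E ⊗ Y) ∈ G.P (𝟙_ E) Y (𝟙_ E) Y := by simpa using G.vac (𝟙 (𝟙_ E)) (𝟙 Y)
  convert G.tensorHom_comp_comp_tensorHom_mem_s10 (G.par hc hid) (ρ_ X).inv (λ_ Y).inv
    (toUnit _) e using 1
  ext
  simp only [Category.assoc, lift_snd, tensorHom_snd, tensorμ_snd_assoc,
    tensorHom_comp_tensorHom_assoc, leftUnitor_inv_snd, Category.comp_id, Category.id_comp]
  simp only [← Category.assoc]
  congr 1
  ext <;> simp [whiskerLeft_toUnit_comp_rightUnitor_hom_assoc]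

end GuardedStructure

end Cartesian

section Closed

variable {V : Type*} [Category V] [MonoidalCategory V] [MonoidalClosed V]

def IsExponential (Gd : ∀ X Y : V, Set (X ⟶ Y)) : Prop :=
  ∀ (W X Y : V) (f : X ⟶ Y), f ∈ Gd X Y → (ihom W).map f ∈ Gd (W ⟹ X) (W ⟹ Y)

lemma curry_ev_app_comp (W : V) {X Y : V} (f : X ⟶ Y) :
    curry ((ihom.ev W).app X ≫ f) = (ihom W).map f := by
  rw [curry_natural_right, ← uncurry_id_eq_ev, curry_uncurry, Category.id_comp]

lemma curry_tensorμ_comp_tensorHom [BraidedCategory V] {A A' B B' Y Y' : V} (f : B ⊗ A ⟶ Y)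
    (g : B' ⊗ A' ⟶ Y') :
    curry (tensorμ B B' A A' ≫ (f ⊗ₘ g)) =
      (curry f ⊗ₘ curry g) ≫
        curry (tensorμ _ _ _ _ ≫ ((ihom.ev B).app Y ⊗ₘ (ihom.ev B').app Y')) := by
  rw [← curry_natural_left, tensorμ_natural_right_assoc, tensorHom_comp_tensorHom,
    whiskerLeft_curry_ihom_ev_app, whiskerLeft_curry_ihom_ev_app]

end Closed

lemma lift_comp_curry_comp_ev {W A B Z : D} (u : W ⟶ B) (v : W ⟶ A) (h : B ⊗ A ⟶ Z) :
    lift u (v ≫ curry h) ≫ (ihom.ev B).app Z = lift u v ≫ h := by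
  rw [show lift u (v ≫ curry h) = lift u v ≫ B ◁ curry h by ext <;> simp, Category.assoc,
    whiskerLeft_curry_ihom_ev_app]

/-- The second factor is the internal S-combinator `(φ, ψ) ↦ fun b ↦ φ b (ψ b)`. -/
lemma curry_lift_comp_ev {A B F Y : D} (u : B ⊗ A ⟶ F ⟹ Y) (v : B ⊗ A ⟶ F) :
    curry (lift v u ≫ (ihom.ev F).app Y) = lift (curry u) (curry v) ≫
      curry (lift (B ◁ snd _ _ ≫ (ihom.ev B).app F) (B ◁ fst _ _ ≫ (ihom.ev B).app (F ⟹ Y)) ≫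
        (ihom.ev F).app Y) := by
  rw [← curry_natural_left, comp_lift_assoc, ← whiskerLeft_comp_assoc, ← whiskerLeft_comp_assoc,
    lift_fst, lift_snd, whiskerLeft_curry_ihom_ev_app, whiskerLeft_curry_ihom_ev_app]

/-- The guarded structure of the candidate family `u ∈ Hom^{pr₁}(X × Y, Z) ↔ curry u ∈ Gd X (Z^Y)`:
only the guarded output `pr₂ ∘ f` of `f` is constrained. -/
def curryFamily (Gd : ∀ X Y : D, Set (X ⟶ Y)) (A B X Y : D) : Set (A ⊗ B ⟶ X ⊗ Y) :=
  {f | curry ((β_ B A).hom ≫ f ≫ snd X Y) ∈ Gd A (B ⟹ Y)}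

section curryFamily

variable {Gd : ∀ X Y : D, Set (X ⟶ Y)}

lemma mem_curryFamily {A B X Y : D} {f : A ⊗ B ⟶ X ⊗ Y} :
    f ∈ curryFamily Gd A B X Y ↔ curry ((β_ B A).hom ≫ f ≫ snd X Y) ∈ Gd A (B ⟹ Y) :=
  Iff.rfl

variable (hGd : IsGuardedIdeal Gd)
include hGd

lemma curryFamily_uni (A : D) : (β_ (𝟙_ D) A).hom ∈ curryFamily Gd (𝟙_ D) A A (𝟙_ D) := by
  rw [mem_curryFamily, ← Category.id_comp (curry _)]
  exact hGd.comp_mem_of_unit _ _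

lemma curryFamily_vac {A B X Y : D} (f : A ⟶ X) (g : B ⟶ Y) :
    f ⊗ₘ g ∈ curryFamily Gd A B X Y := by
  have hfactor : (β_ B A).hom ≫ (f ⊗ₘ g) ≫ snd X Y = B ◁ toUnit A ≫ (ρ_ B).hom ≫ g := by
    simp [whiskerLeft_toUnit_comp_rightUnitor_hom_assoc]
  rw [mem_curryFamily, hfactor, curry_natural_left]
  exact hGd.comp_mem_of_unit _ _

lemma curryFamily_cmp (hexp : IsExponential Gd) {A B A' B' X Y : D} {g : A ⊗ B ⟶ A' ⊗ B'}
    {f : A' ⊗ B' ⟶ X ⊗ Y} (hg : g ∈ curryFamily Gd A B A' B')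
    (hf : f ∈ curryFamily Gd A' B' X Y) : g ≫ f ∈ curryFamily Gd A B X Y := by
  set cf := curry ((β_ B' A').hom ≫ f ≫ snd X Y)
  have hsnd : f ≫ snd X Y = lift (snd _ _) (fst _ _ ≫ cf) ≫ (ihom.ev B').app Y := by
    rw [lift_comp_curry_comp_ev, lift_snd_fst, SymmetricCategory.symmetry_assoc]
  have hsplit : (β_ B A).hom ≫ (g ≫ f) ≫ snd X Y =
      lift ((β_ B A).hom ≫ g ≫ snd _ _) ((β_ B A).hom ≫ g ≫ fst _ _ ≫ cf) ≫
        (ihom.ev B').app Y := by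
    rw [Category.assoc, hsnd]
    simp only [comp_lift_assoc]
  have hfst : curry ((β_ B A).hom ≫ g ≫ fst _ _ ≫ cf) ∈ Gd A (B ⟹ B' ⟹ Y) := by
    rw [← Category.assoc, ← Category.assoc, curry_natural_right]
    exact hGd.comp_mem_left _ (hexp B _ _ cf hf)
  rw [mem_curryFamily, hsplit, curry_lift_comp_ev]
  exact hGd.comp_mem_right (hGd.lift_mem hfst hg) _

lemma curryFamily_par {A B X Y A' B' X' Y' : D} {f : A ⊗ B ⟶ X ⊗ Y} {g : A' ⊗ B' ⟶ X' ⊗ Y'}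
    (hf : f ∈ curryFamily Gd A B X Y) (hg : g ∈ curryFamily Gd A' B' X' Y') :
    tensorμ A A' B B' ≫ (f ⊗ₘ g) ≫ tensorμ X Y X' Y' ∈
      curryFamily Gd (A ⊗ A') (B ⊗ B') (X ⊗ X') (Y ⊗ Y') := by
  have hsplit : (β_ (B ⊗ B') (A ⊗ A')).hom ≫ (tensorμ A A' B B' ≫ (f ⊗ₘ g) ≫
      tensorμ X Y X' Y') ≫ snd _ _ =
      tensorμ B B' A A' ≫ (((β_ B A).hom ≫ f ≫ snd X Y) ⊗ₘ ((β_ B' A').hom ≫ g ≫ snd X' Y')) := by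
    ext <;> simp
  rw [mem_curryFamily, hsplit, curry_tensorμ_comp_tensorHom]
  exact hGd.comp_mem_right (hGd.tensorHom_mem hf hg) _

def curryStructure (hexp : IsExponential Gd) : GuardedStructure D where
  P := curryFamily Gd
  uni := curryFamily_uni hGd
  vac := curryFamily_vac hGd
  cmp := curryFamily_cmp hGd hexp
  par := curryFamily_par hGd

lemma mem_guardedMor_curryStructure (hexp : IsExponential Gd) {X Y : D} {f : X ⟶ Y}
    (hf : f ∈ Gd X Y) : f ∈ GuardedMor (curryStructure hGd hexp) X Y := by
  have hfactor : (β_ (𝟙_ D) X).hom ≫ ((ρ_ X).hom ≫ f ≫ (λ_ Y).inv) ≫ snd _ _ =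
      𝟙_ D ◁ f ≫ snd _ _ := by
    simp [rightUnitor_hom]
  refine mem_curryFamily.2 ?_
  rw [hfactor, curry_natural_left]
  exact hGd.comp_mem_right hf _

end curryFamily

/-- Let `Gd` be a guarded ideal on a Cartesian closed category and let
`G` be the guarded structure generated by `Gd`.  The candidate Cartesian guardedness family
given by `f ∈ Hom^{pr₁}(X×Y, Z) ↔ curry f ∈ Gd X (Z^Y)` describes the generated guarded
structure (where `u ∈ Hom^{pr₁}(X×Y, Z)` is rendered as `⟨!, u⟩ ∈ Hom•(X×Y, 1×Z)`) if and
only if `Gd` is *exponential*: `f ∈ Gd X Y` implies `f^V ∈ Gd (X^V) (Y^V)` for all `V`. -/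
theorem curry_describes_generated_iff_exponential (Gd : ∀ X Y : D, Set (X ⟶ Y))
    (hGd : IsGuardedIdeal Gd) (G : GuardedStructure D) (hgen : Generates Gd G) :
    (∀ (X Y Z : D) (f : (X ⊗ Y) ⟶ Z),
      (lift (toUnit (X ⊗ Y)) f ∈ G.P X Y (𝟙_ D) Z) ↔
        curry ((β_ Y X).hom ≫ f) ∈ Gd X (Y ⟹ Z)) ↔
    (∀ (V X Y : D) (f : X ⟶ Y), f ∈ Gd X Y → (ihom V).map f ∈ Gd (V ⟹ X) (V ⟹ Y)) := by
  constructor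
  · intro hdesc V X Y f hf
    have hmem :=
      G.lift_toUnit_comp_mem (hgen.1 X Y f hf) ((β_ (V ⟹ X) V).hom ≫ (ihom.ev V).app X)
    simpa [curry_ev_app_comp] using (hdesc _ _ _ _).1 hmem
  · intro hexp X Y Z f
    constructor
    · intro hmem
      simpa using mem_curryFamily.1 <|
        hgen.2 (curryStructure hGd hexp) (fun _ _ _ ↦ mem_guardedMor_curryStructure hGd hexp)
          _ _ _ _ _ hmem
    · intro hcurry
      have hf : curry ((β_ Y X).hom ≫ f) ▷ Y ≫ (β_ _ Y).hom ≫ (ihom.ev Y).app Z = f := by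
        rw [BraidedCategory.braiding_naturality_left_assoc, whiskerLeft_curry_ihom_ev_app,
          SymmetricCategory.symmetry_assoc]
      simpa only [hf] using G.lift_toUnit_whiskerRight_comp_mem (Z := Z) (hgen.1 _ _ _ hcurry)
        ((β_ _ Y).hom ≫ (ihom.ev Y).app Z)

end CCC
end
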